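/- For the negative gradient flow γ_{(x,y)}(t) = (e^{2t}x, e^{−2t}y) on ℝ^λ × ℝ^{m−λ} and ε > 0, the set V^u = {γ_{(x,y)}(t) : |(x,y)| < ε, t ≥ 0} is an open neighborhood of ℝ^λ × {0} in ℝ^m, and every boundary point (y,z) ∈ ∂V^u satisfies ρ_λ(y) = |z|, where ρ_λ(y) = √(ε² − |y|²) for |y| ≤ ε/√2 and ρ_λ(y) = ε²/(2|y|) for |y| ≥ ε/√2. -/

import Mathlib

/-!
Only the norms `a = ‖x‖`, `b = ‖y‖` matter, and the orbit through a point with norms `(a, b)`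
consists of the points with norms `(e * a, e⁻¹ * b)`, `e > 0`. So a point lies in `V^u` iff its
backward orbit `{(a / e, e * b) : e ≥ 1}` meets the open `ε`-ball. The infimum of
`(a / e)² + (e * b)²` over `e ≥ 1` is `a² + b²` if `a ≤ b`, and `2ab` if `a > b` (AM-GM, attained
at `e² = a / b`, approached as `e → ∞` if `b = 0`). This continuous function
`g(a, b) = a² + b² - max (a - b) 0 ²` cuts out `V^u = {g < ε²}`, which is therefore open with
frontier inside `{g = ε²}`, and this level set is exactly the graph `b = ρ_λ(a)`.
-/

open Real Filter

/-- The function `ρ_λ` of the paper. -/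
noncomputable def rhoFun (ε : ℝ) {n : ℕ} (y : EuclideanSpace ℝ (Fin n)) : ℝ :=
  if ‖y‖ ≤ ε / Real.sqrt 2 then Real.sqrt (ε ^ 2 - ‖y‖ ^ 2) else ε ^ 2 / (2 * ‖y‖)

def flowGauge (a b : ℝ) : ℝ := a ^ 2 + b ^ 2 - max (a - b) 0 ^ 2

section flowGauge

variable {a b : ℝ}

theorem flowGauge_of_le (h : a ≤ b) : flowGauge a b = a ^ 2 + b ^ 2 := by
  simp [flowGauge, max_eq_right (sub_nonpos.2 h)]

theorem flowGauge_of_lt (h : b < a) : flowGauge a b = 2 * a * b := by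
  rw [flowGauge, max_eq_left (sub_nonneg.2 h.le)]
  ring

theorem flowGauge_le_sq_add_sq (ha : 0 ≤ a) {e : ℝ} (he : 1 ≤ e) :
    flowGauge a b ≤ (e⁻¹ * a) ^ 2 + (e * b) ^ 2 := by
  have he₀ : 0 < e := zero_lt_one.trans_le he
  rcases le_or_gt a b with hab | hab
  · rw [flowGauge_of_le hab]
    set u := e⁻¹ * a
    have hau : a = e * u := by simp only [u]; field_simp
    have hub : u ≤ b := (mul_le_of_le_one_left ha (inv_le_one_of_one_le₀ he)).trans hab
    have hu : 0 ≤ u := by positivity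
    -- with `a = e u`, the claim is `(e² - 1) u² ≤ (e² - 1) b²`
    rw [hau]
    nlinarith [mul_nonneg (sub_nonneg.2 (one_le_pow₀ he : (1 : ℝ) ≤ e ^ 2))
      (sub_nonneg.2 (pow_le_pow_left₀ hu hub 2))]
  · rw [flowGauge_of_lt hab]
    have : e⁻¹ * a * (e * b) = a * b := by field_simp
    nlinarith [sq_nonneg (e⁻¹ * a - e * b)]

theorem exists_sq_add_sq_lt_of_flowGauge_lt (ha : 0 ≤ a) (hb : 0 ≤ b) {c : ℝ}
    (h : flowGauge a b < c) : ∃ e ≥ 1, (e⁻¹ * a) ^ 2 + (e * b) ^ 2 < c := by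
  rcases le_or_gt a b with hab | hab
  · exact ⟨1, le_rfl, by simpa [flowGauge_of_le hab] using h⟩
  rcases hb.eq_or_lt with rfl | hb₀
  · have hc : 0 < c := by simpa [flowGauge_of_lt hab] using h
    have hlim : Tendsto (fun e : ℝ => (e⁻¹ * a) ^ 2 + (e * 0) ^ 2) atTop (nhds 0) := by
      simpa using ((tendsto_inv_atTop_zero.mul_const a).pow 2)
    exact ((eventually_ge_atTop 1).and (hlim.eventually (gt_mem_nhds hc))).exists
  · refine ⟨√(a / b), Real.one_le_sqrt.2 ((one_le_div hb₀).2 hab.le), ?_⟩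
    have hsq : √(a / b) ^ 2 = a / b := Real.sq_sqrt (div_nonneg ha hb₀.le)
    have hval : ((√(a / b))⁻¹ * a) ^ 2 + (√(a / b) * b) ^ 2 = 2 * a * b := by
      rw [mul_pow, mul_pow, inv_pow, hsq]
      field_simp
      ring
    rwa [hval, ← flowGauge_of_lt hab]

theorem exists_sq_add_sq_lt_iff_flowGauge_lt (ha : 0 ≤ a) (hb : 0 ≤ b) (c : ℝ) :
    (∃ e ≥ 1, (e⁻¹ * a) ^ 2 + (e * b) ^ 2 < c) ↔ flowGauge a b < c :=
  ⟨fun ⟨_, he, h⟩ => (flowGauge_le_sq_add_sq ha he).trans_lt h,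
    exists_sq_add_sq_lt_of_flowGauge_lt ha hb⟩

end flowGauge

section flowout

variable {E F : Type*} [NormedAddCommGroup E] [NormedSpace ℝ E]
  [NormedAddCommGroup F] [NormedSpace ℝ F]

variable (E F) in
def flowout (c : ℝ) : Set (E × F) :=
  {p | ∃ (x : E) (y : F) (t : ℝ), ‖x‖ ^ 2 + ‖y‖ ^ 2 < c ∧ 0 ≤ t ∧
    p = (exp (2 * t) • x, exp (-(2 * t)) • y)}

theorem mem_flowout_iff {c : ℝ} {p : E × F} :
    p ∈ flowout E F c ↔ ∃ e ≥ 1, (e⁻¹ * ‖p.1‖) ^ 2 + (e * ‖p.2‖) ^ 2 < c := by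
  constructor
  · rintro ⟨x, y, t, hxy, ht, rfl⟩
    refine ⟨exp (2 * t), one_le_exp (by linarith), ?_⟩
    have hinv : exp (-(2 * t)) = (exp (2 * t))⁻¹ := exp_neg _
    rwa [hinv, norm_smul_of_nonneg (exp_pos _).le, norm_smul_of_nonneg (inv_pos.2 (exp_pos _)).le,
      ← mul_assoc, ← mul_assoc, inv_mul_cancel₀ (exp_pos _).ne', mul_inv_cancel₀ (exp_pos _).ne',
      one_mul, one_mul]
  · rintro ⟨e, he, h⟩
    have he₀ : 0 < e := zero_lt_one.trans_le he
    have hexp : exp (2 * (log e / 2)) = e := by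
      rw [mul_div_cancel₀ _ two_ne_zero, exp_log he₀]
    refine ⟨e⁻¹ • p.1, e • p.2, log e / 2, ?_, by linarith [log_nonneg he], ?_⟩
    · rwa [norm_smul_of_nonneg (inv_nonneg.2 he₀.le), norm_smul_of_nonneg he₀.le]
    · simp [hexp, exp_neg, smul_smul, he₀.ne']

theorem flowout_eq_setOf_flowGauge_lt (c : ℝ) :
    flowout E F c = {p | flowGauge ‖p.1‖ ‖p.2‖ < c} := by
  ext p
  rw [mem_flowout_iff, exists_sq_add_sq_lt_iff_flowGauge_lt (norm_nonneg _) (norm_nonneg _)]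
  rfl

end flowout

theorem le_div_sqrt_two_iff {a ε : ℝ} (ha : 0 ≤ a) (hε : 0 ≤ ε) :
    a ≤ ε / √2 ↔ 2 * a ^ 2 ≤ ε ^ 2 := by
  rw [le_div_iff₀ (by positivity), ← pow_le_pow_iff_left₀ (by positivity) hε two_ne_zero,
    mul_pow, Real.sq_sqrt zero_le_two, mul_comm]

theorem rhoFun_eq_of_flowGauge_eq {ε : ℝ} (hε : 0 ≤ ε) {n : ℕ} {y : EuclideanSpace ℝ (Fin n)}
    {b : ℝ} (hb : 0 ≤ b) (h : flowGauge ‖y‖ b = ε ^ 2) : rhoFun ε y = b := by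
  have ha := norm_nonneg y
  rcases le_or_gt ‖y‖ b with hab | hab
  · rw [flowGauge_of_le hab] at h
    have hle : ‖y‖ ≤ ε / √2 := (le_div_sqrt_two_iff ha hε).2 (by nlinarith)
    rw [rhoFun, if_pos hle, show ε ^ 2 - ‖y‖ ^ 2 = b ^ 2 by linarith, Real.sqrt_sq hb]
  · rw [flowGauge_of_lt hab] at h
    have hgt : ¬ ‖y‖ ≤ ε / √2 := by
      rw [le_div_sqrt_two_iff ha hε, ← h]
      nlinarith
    rw [rhoFun, if_neg hgt, div_eq_iff (by linarith), ← h]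
    ring

/-- The flow-out `V^u = {γ_{(x,y)}(t) : |(x,y)| < ε, t ≥ 0}` of the ε-ball under the
negative gradient flow `(e^{2t} x, e^{-2t} y)` is an open neighborhood of `ℝ^λ × {0}`,
and every boundary point `(y,z)` of `V^u` satisfies `ρ_λ(y) = |z|`. -/
theorem flowout_open_and_boundary (l k : ℕ) (ε : ℝ) (hε : 0 < ε)
    (V : Set (EuclideanSpace ℝ (Fin l) × EuclideanSpace ℝ (Fin k)))
    (hV : V = {p | ∃ (x : EuclideanSpace ℝ (Fin l)) (y : EuclideanSpace ℝ (Fin k)) (t : ℝ),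
      ‖x‖ ^ 2 + ‖y‖ ^ 2 < ε ^ 2 ∧ 0 ≤ t ∧
      p = (Real.exp (2 * t) • x, Real.exp (-(2 * t)) • y)}) :
    IsOpen V ∧
    (∀ x : EuclideanSpace ℝ (Fin l), ((x, 0) : EuclideanSpace ℝ (Fin l) ×
      EuclideanSpace ℝ (Fin k)) ∈ V) ∧
    (∀ p ∈ frontier V, rhoFun ε p.1 = ‖p.2‖) := by
  have hVg : V = {p | flowGauge ‖p.1‖ ‖p.2‖ < ε ^ 2} :=
    hV.trans (flowout_eq_setOf_flowGauge_lt (ε ^ 2))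
  have hcont : Continuous fun p : EuclideanSpace ℝ (Fin l) × EuclideanSpace ℝ (Fin k) =>
      flowGauge ‖p.1‖ ‖p.2‖ := by
    unfold flowGauge
    fun_prop
  subst hVg
  refine ⟨isOpen_lt hcont continuous_const, fun x => ?_, fun p hp => ?_⟩
  · change flowGauge ‖x‖ ‖(0 : EuclideanSpace ℝ (Fin k))‖ < ε ^ 2
    simp [flowGauge, hε]
  · exact rhoFun_eq_of_flowGauge_eq hε.le (norm_nonneg _)
      (frontier_lt_subset_eq hcont continuous_const hp)
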